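/- Let ρ be a state on C^d ⊗ C^d whose partial transpose ρ^{T_B} has a negative eigenvalue λ with unit eigenvector ψ, and suppose R ≥ 0 is such that W = |ψ⟩⟨ψ| + R·I has Schmidt number 2 (i.e., W/Tr(W) is a density matrix of Schmidt number ≤ 2). If λ < −R, then ρ is 1-distillable: there exists a Schmidt-rank-2 unit vector φ with ⟨φ, ρ^{T_B} φ⟩ < 0. -/

import Mathlib

open scoped BigOperators ComplexConjugate ComplexOrder

noncomputable section

/-- The partial transpose on the second tensor factor. -/
def ptB {d : ℕ} (ρ : Matrix (Fin d × Fin d) (Fin d × Fin d) ℂ) :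
    Matrix (Fin d × Fin d) (Fin d × Fin d) ℂ :=
  fun p q => ρ (p.1, q.2) (q.1, p.2)

/-- A vector of `ℂ^d ⊗ ℂ^d` has Schmidt rank at most `n`. -/
def SchmidtRankLE (d n : ℕ) (ψ : Fin d × Fin d → ℂ) : Prop :=
  ∃ a b : Fin n → Fin d → ℂ, ∀ p, ψ p = ∑ i, a i p.1 * b i p.2

/-- A positive operator has Schmidt number at most `n` if it is a nonnegative
combination of pure states of Schmidt rank at most `n`. -/
def SchmidtNumberLE (d n : ℕ) (ρ : Matrix (Fin d × Fin d) (Fin d × Fin d) ℂ) : Prop :=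
  ∃ (m : ℕ) (c : Fin m → ℝ) (ψ : Fin m → Fin d × Fin d → ℂ),
    (∀ t, 0 ≤ c t) ∧ (∀ t, SchmidtRankLE d n (ψ t)) ∧
    ∀ p q, ρ p q = ∑ t, (c t : ℂ) * (ψ t p * conj (ψ t q))

/-!
Pairing `W = |ψ⟩⟨ψ| + R·I` with `ρ^{T_B}` gives
`Tr (W ρ^{T_B}) = ⟨ψ, ρ^{T_B} ψ⟩ + R·Tr ρ = λ + R < 0`, partial transposition preserving the trace.
Writing `W = ∑ₜ cₜ |Ψₜ⟩⟨Ψₜ|` with `cₜ ≥ 0` and each `Ψₜ` of Schmidt rank at most 2, the same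
pairing is `∑ₜ cₜ ⟨Ψₜ, ρ^{T_B} Ψₜ⟩`, so some `Ψₜ` has a negative expectation; normalising it gives
the required vector.
-/

open Matrix

section

variable {ι : Type*} [Fintype ι]

lemma Matrix.trace_vecMulVec_star_mul (ψ : ι → ℂ) (M : Matrix ι ι ℂ) :
    (vecMulVec ψ (star ψ) * M).trace = star ψ ⬝ᵥ M *ᵥ ψ := by
  rw [trace_mul_comm, mul_vecMulVec, trace_vecMulVec, dotProduct_comm]

lemma star_dotProduct_self_eq_sum_norm_sq (ψ : ι → ℂ) :
    star ψ ⬝ᵥ ψ = ((∑ p, ‖ψ p‖ ^ 2 : ℝ) : ℂ) := by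
  simp only [dotProduct, Pi.star_apply, Complex.star_def, Complex.conj_mul', Complex.ofReal_sum,
    Complex.ofReal_pow]

lemma star_dotProduct_mulVec_of_mulVec_eq_smul {M : Matrix ι ι ℂ} {ψ : ι → ℂ} {lam : ℂ}
    (heig : M *ᵥ ψ = lam • ψ) (hψ : ∑ p, ‖ψ p‖ ^ 2 = 1) : star ψ ⬝ᵥ M *ᵥ ψ = lam := by
  rw [heig, dotProduct_smul, star_dotProduct_self_eq_sum_norm_sq, hψ, Complex.ofReal_one,
    smul_eq_mul, mul_one]

lemma star_dotProduct_mulVec_ofReal_smul (M : Matrix ι ι ℂ) (φ : ι → ℂ) (r : ℝ) :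
    star ((r : ℂ) • φ) ⬝ᵥ M *ᵥ ((r : ℂ) • φ) = ((r ^ 2 : ℝ) : ℂ) * (star φ ⬝ᵥ M *ᵥ φ) := by
  rw [star_smul, mulVec_smul, dotProduct_smul, smul_dotProduct, Complex.star_def,
    Complex.conj_ofReal, smul_eq_mul, smul_eq_mul]
  push_cast
  ring

lemma sum_norm_sq_ofReal_smul (φ : ι → ℂ) (r : ℝ) :
    ∑ p, ‖((r : ℂ) • φ) p‖ ^ 2 = r ^ 2 * ∑ p, ‖φ p‖ ^ 2 := by
  simp only [Pi.smul_apply, smul_eq_mul, norm_mul, Complex.norm_real, Real.norm_eq_abs, mul_pow,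
    sq_abs, Finset.mul_sum]

end

lemma trace_ptB {d : ℕ} (ρ : Matrix (Fin d × Fin d) (Fin d × Fin d) ℂ) :
    (ptB ρ).trace = ρ.trace :=
  rfl

lemma SchmidtRankLE.smul {d n : ℕ} {φ : Fin d × Fin d → ℂ} (h : SchmidtRankLE d n φ) (z : ℂ) :
    SchmidtRankLE d n (z • φ) := by
  obtain ⟨a, b, hab⟩ := h
  refine ⟨z • a, b, fun p => ?_⟩
  simp only [Pi.smul_apply, smul_eq_mul, hab p, Finset.mul_sum, mul_assoc]

lemma SchmidtNumberLE.exists_re_star_dotProduct_mulVec_neg {d n : ℕ}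
    {W : Matrix (Fin d × Fin d) (Fin d × Fin d) ℂ} (hW : SchmidtNumberLE d n W)
    (M : Matrix (Fin d × Fin d) (Fin d × Fin d) ℂ)
    (hneg : (W * M).trace.re < 0) :
    ∃ φ, SchmidtRankLE d n φ ∧ (star φ ⬝ᵥ M *ᵥ φ).re < 0 := by
  obtain ⟨m, c, Ψ, hc, hrank, hWeq⟩ := hW
  have hWsum : W = ∑ t, (c t : ℂ) • vecMulVec (Ψ t) (star (Ψ t)) := by
    ext p q
    simp [hWeq, Matrix.sum_apply, vecMulVec_apply]
  have htrace : (W * M).trace.re = ∑ t, c t * (star (Ψ t) ⬝ᵥ M *ᵥ Ψ t).re := by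
    simp only [hWsum, Finset.sum_mul, trace_sum, smul_mul_assoc, trace_smul,
      trace_vecMulVec_star_mul, smul_eq_mul, Complex.re_sum, Complex.re_ofReal_mul]
  obtain ⟨t, -, ht⟩ : ∃ t ∈ Finset.univ, c t * (star (Ψ t) ⬝ᵥ M *ᵥ Ψ t).re < 0 := by
    refine Finset.exists_lt_of_sum_lt ?_
    simpa [← htrace] using hneg
  exact ⟨Ψ t, hrank t, neg_of_mul_neg_right ht (hc t)⟩

lemma exists_unit_of_re_star_dotProduct_mulVec_neg {d n : ℕ}
    {M : Matrix (Fin d × Fin d) (Fin d × Fin d) ℂ} {φ : Fin d × Fin d → ℂ}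
    (hφ : SchmidtRankLE d n φ) (hneg : (star φ ⬝ᵥ M *ᵥ φ).re < 0) :
    ∃ χ, SchmidtRankLE d n χ ∧ ∑ p, ‖χ p‖ ^ 2 = 1 ∧ (star χ ⬝ᵥ M *ᵥ χ).re < 0 := by
  set s := ∑ p, ‖φ p‖ ^ 2
  have hφ0 : φ ≠ 0 := by
    rintro rfl
    simp at hneg
  have hs : 0 < s := by
    have hpos := dotProduct_star_self_pos_iff.mpr hφ0
    rw [star_dotProduct_self_eq_sum_norm_sq] at hpos
    exact_mod_cast hpos
  set r := (Real.sqrt s)⁻¹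
  have hr : r ^ 2 = s⁻¹ := by rw [inv_pow, Real.sq_sqrt hs.le]
  refine ⟨(r : ℂ) • φ, hφ.smul _, ?_, ?_⟩
  · rw [sum_norm_sq_ofReal_smul, hr, inv_mul_cancel₀ hs.ne']
  · rw [star_dotProduct_mulVec_ofReal_smul, Complex.re_ofReal_mul]
    exact mul_neg_of_pos_of_neg (by positivity) hneg

theorem one_distillable_of_schmidt_robustness_general (d : ℕ)
    (ρ : Matrix (Fin d × Fin d) (Fin d × Fin d) ℂ)
    (htr : ρ.trace = 1)
    (lam : ℝ)
    (ψ : Fin d × Fin d → ℂ) (hψ : ∑ p, ‖ψ p‖ ^ 2 = 1)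
    (heig : (ptB ρ).mulVec ψ = (lam : ℂ) • ψ)
    (R : ℝ)
    (hW : SchmidtNumberLE d 2
        (Matrix.of (fun p q : Fin d × Fin d => ψ p * conj (ψ q)) +
          (R : ℂ) • (1 : Matrix (Fin d × Fin d) (Fin d × Fin d) ℂ)))
    (hlt : lam < -R) :
    ∃ φ : Fin d × Fin d → ℂ,
      SchmidtRankLE d 2 φ ∧ (∑ p, ‖φ p‖ ^ 2 = 1) ∧
      (dotProduct (star φ) ((ptB ρ).mulVec φ)).re < 0 := by
  have hpairing : ((Matrix.of (fun p q : Fin d × Fin d => ψ p * conj (ψ q)) +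
      (R : ℂ) • (1 : Matrix (Fin d × Fin d) (Fin d × Fin d) ℂ)) * ptB ρ).trace = lam + R := by
    rw [add_mul, trace_add, smul_mul_assoc, one_mul, trace_smul, trace_ptB, htr, smul_eq_mul,
      mul_one]
    congr 1
    exact (trace_vecMulVec_star_mul ψ _).trans (star_dotProduct_mulVec_of_mulVec_eq_smul heig hψ)
  obtain ⟨φ, hφ, hneg⟩ := hW.exists_re_star_dotProduct_mulVec_neg (ptB ρ) (by
    rw [hpairing, Complex.add_re, Complex.ofReal_re, Complex.ofReal_re]
    linarith)
  exact exists_unit_of_re_star_dotProduct_mulVec_neg hφ hneg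

/-- If `ρ^{T_B}` has a negative eigenvalue `λ` with unit eigenvector `ψ`, and
`W = |ψ⟩⟨ψ| + R·I` has Schmidt number at most `2` with `λ < −R`, then `ρ` is
1-distillable: some Schmidt-rank-2 unit vector `φ` has `⟨φ, ρ^{T_B} φ⟩ < 0`. -/
theorem one_distillable_of_schmidt_robustness (d : ℕ) (hd : 0 < d)
    (ρ : Matrix (Fin d × Fin d) (Fin d × Fin d) ℂ)
    (hpsd : ρ.PosSemidef) (htr : ρ.trace = 1)
    (lam : ℝ) (hlamneg : lam < 0)
    (ψ : Fin d × Fin d → ℂ) (hψ : ∑ p, ‖ψ p‖ ^ 2 = 1)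
    (heig : (ptB ρ).mulVec ψ = (lam : ℂ) • ψ)
    (R : ℝ) (hR : 0 ≤ R)
    (hW : SchmidtNumberLE d 2
        (Matrix.of (fun p q : Fin d × Fin d => ψ p * conj (ψ q)) +
          (R : ℂ) • (1 : Matrix (Fin d × Fin d) (Fin d × Fin d) ℂ)))
    (hlt : lam < -R) :
    ∃ φ : Fin d × Fin d → ℂ,
      SchmidtRankLE d 2 φ ∧ (∑ p, ‖φ p‖ ^ 2 = 1) ∧
      (dotProduct (star φ) ((ptB ρ).mulVec φ)).re < 0 :=
  one_distillable_of_schmidt_robustness_general d ρ htr lam ψ hψ heig R hW hlt
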